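/- arXiv:2105.14339 — 2 statements merged into one kernel-verified Lean document; each statement's English description precedes it below -/
import Mathlib

section
/- Let L be a finite simple graph whose vertex set is the disjoint union of nonempty sets A and B, such that there is exactly one edge of L joining a vertex of A to a vertex of B, the induced subgraph L[A] is well-f-covered, and the induced subgraph L[B] is well-f-covered. Then L is well-f-covered and f(L) = f(L[A]) + f(L[B]). -/
/-- `X` induces a forest in `G`: the subgraph induced by `X` is acyclic. -/
def IsInducedForest {V : Type*} (G : SimpleGraph V) (X : Finset V) : Prop :=
  (G.induce (X : Set V)).IsAcyclic

/-- `X` is a maximal induced forest of `G`. -/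
def IsMaximalInducedForest {V : Type*} (G : SimpleGraph V) (X : Finset V) : Prop :=
  IsInducedForest G X ∧ ∀ Y : Finset V, X ⊂ Y → ¬ IsInducedForest G Y

/-- The forest number of `G`: maximum cardinality of an induced forest. -/
noncomputable def forestNum {V : Type*} (G : SimpleGraph V) : ℕ :=
  sSup {n | ∃ X : Finset V, IsInducedForest G X ∧ X.card = n}

/-- `G` is well-f-covered: all maximal induced forests have the same cardinality. -/
def WellFCovered {V : Type*} (G : SimpleGraph V) : Prop :=
  ∀ X Y : Finset V, IsMaximalInducedForest G X → IsMaximalInducedForest G Y →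
    X.card = Y.card

def IsIndepFinset {V : Type*} (G : SimpleGraph V) (X : Finset V) : Prop :=
  ∀ ⦃u⦄, u ∈ X → ∀ ⦃v⦄, v ∈ X → ¬ G.Adj u v

def IsMaximalIndepSet {V : Type*} (G : SimpleGraph V) (X : Finset V) : Prop :=
  IsIndepFinset G X ∧ ∀ Y : Finset V, X ⊂ Y → ¬ IsIndepFinset G Y

noncomputable def indepNum {V : Type*} (G : SimpleGraph V) : ℕ :=
  sSup {n | ∃ X : Finset V, IsIndepFinset G X ∧ X.card = n}

def WellCovered {V : Type*} (G : SimpleGraph V) : Prop :=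
  ∀ X Y : Finset V, IsMaximalIndepSet G X → IsMaximalIndepSet G Y → X.card = Y.card

/-- The join of two graphs on disjoint vertex sets. -/
def joinGraph {V W : Type*} (G : SimpleGraph V) (H : SimpleGraph W) :
    SimpleGraph (V ⊕ W) where
  Adj a b :=
    match a, b with
    | Sum.inl u, Sum.inl v => G.Adj u v
    | Sum.inr u, Sum.inr v => H.Adj u v
    | Sum.inl _, Sum.inr _ => True
    | Sum.inr _, Sum.inl _ => True
  symm := ⟨by rintro (u|u) (v|v) h <;> first | exact h.symm | trivial⟩
  loopless := ⟨by rintro (u|u) h <;> exact SimpleGraph.irrefl _ h⟩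

/-! A closed trail that meets both `S` and its complement crosses between them at least twice,
along distinct edges, so it cannot exist when a single edge joins `S` to its complement. Hence the
union of an induced forest inside `A` and one inside `B` is again an induced forest, and a maximal
induced forest of `L` restricts to maximal induced forests of `L[A]` and `L[B]`. Every maximal
induced forest of `L` therefore has `f(L[A]) + f(L[B])` vertices, and a maximum one is maximal. -/

namespace SimpleGraph

variable {V : Type*} {G : SimpleGraph V}

def EdgesAcrossEq (G : SimpleGraph V) (S : Set V) (e : Sym2 V) : Prop :=
  ∀ ⦃x y⦄, x ∈ S → y ∉ S → G.Adj x y → s(x, y) = e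

lemma EdgesAcrossEq.compl {S : Set V} {e : Sym2 V} (h : G.EdgesAcrossEq S e) :
    G.EdgesAcrossEq Sᶜ e := fun x y hx hy hxy => by
  rw [Sym2.eq_swap]
  exact h (not_not.1 hy) hx hxy.symm

lemma Walk.IsTrail.support_subset_or_of_edgesAcrossEq {S : Set V} {e : Sym2 V}
    (h : G.EdgesAcrossEq S e) {u : V} {c : G.Walk u u} (hc : c.IsTrail) :
    (∀ x ∈ c.support, x ∈ S) ∨ ∀ x ∈ c.support, x ∉ S := by
  classical
  wlog hu : u ∈ S generalizing S
  · exact (this h.compl hu).symm.imp (fun h x hx => not_not.1 (h x hx)) id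
  refine .inl fun q hq => by_contra fun hqS => ?_
  have mem_edges {v w : V} (p : G.Walk v w) (hv : v ∈ S) (hw : w ∉ S) : e ∈ p.edges := by
    obtain ⟨d, hd, hdS, hdS'⟩ := p.exists_boundary_dart S hv hw
    exact h hdS hdS' d.adj ▸ List.mem_map_of_mem hd
  have hnodup := hc.edges_nodup
  rw [← c.take_spec hq, Walk.edges_append, List.nodup_append] at hnodup
  refine hnodup.2.2 _ (mem_edges _ hu hqS) _ ?_ rfl
  simpa using mem_edges (c.dropUntil q hq).reverse hu hqS

lemma isAcyclic_induce_iff {s : Set V} :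
    (G.induce s).IsAcyclic ↔
      ∀ ⦃u : V⦄ (c : G.Walk u u), c.IsCycle → ¬ ∀ x ∈ c.support, x ∈ s := by
  have hinj : Function.Injective (Embedding.induce (G := G) s).toHom :=
    (Embedding.induce (G := G) s).injective
  refine ⟨fun h u c hc hs => h (c.induce s hs) ?_, fun h u c hc => h _ (hc.map hinj) ?_⟩
  · rwa [← Walk.isCycle_map_iff_of_injective hinj, Walk.map_induce]
  · rw [Walk.support_map]
    intro x hx
    obtain ⟨y, -, rfl⟩ := List.mem_map.1 hx
    exact y.2

end SimpleGraph

open SimpleGraph Finset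

section InducedForest

variable {V : Type*} {L : SimpleGraph V}

lemma IsInducedForest.mono {X Y : Finset V} (hX : IsInducedForest L X) (hYX : Y ⊆ X) :
    IsInducedForest L Y :=
  hX.embedding (L.induceHomOfLE (coe_subset.2 hYX))

lemma isInducedForest_empty : IsInducedForest L ∅ := fun v => (notMem_empty _ v.2).elim

lemma isInducedForest_induce_iff (s : Set V) (Y : Finset s) :
    IsInducedForest (L.induce s) Y ↔
      IsInducedForest L (Y.map (Function.Embedding.subtype _)) := by
  have hrange : Set.range ((Embedding.induce s).comp (Embedding.induce (G := L.induce s) Y)) =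
      Y.map (Function.Embedding.subtype _) := by
    ext x
    simp only [Set.mem_range, coe_map, Function.Embedding.coe_subtype, Set.mem_image, mem_coe]
    exact ⟨fun ⟨y, hy⟩ => ⟨y, y.2, hy⟩, fun ⟨y, hyY, hy⟩ => ⟨⟨y, hyY⟩, hy⟩⟩
  rw [IsInducedForest, IsInducedForest, (Embedding.isoInduceRange _).isAcyclic_iff, hrange]

lemma IsInducedForest.union [DecidableEq V] {S : Set V} {e : Sym2 V} (hS : L.EdgesAcrossEq S e)
    {X Y : Finset V} (hX : IsInducedForest L X) (hY : IsInducedForest L Y)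
    (hXS : ∀ x ∈ X, x ∈ S) (hYS : ∀ y ∈ Y, y ∉ S) : IsInducedForest L (X ∪ Y) := by
  rw [IsInducedForest, isAcyclic_induce_iff] at hX hY ⊢
  intro u c hc hXY
  have hmem : ∀ x ∈ c.support, x ∈ X ∨ x ∈ Y := by simpa using hXY
  rcases hc.isTrail.support_subset_or_of_edgesAcrossEq hS with hin | hout
  · exact hX c hc fun x hx => (hmem x hx).resolve_right fun hy => hYS x hy (hin x hx)
  · exact hY c hc fun x hx => (hmem x hx).resolve_left fun hx' => hout x hx (hXS x hx')

lemma IsMaximalInducedForest.induce [DecidableEq V] {S : Finset V} {e : Sym2 V}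
    (hS : L.EdgesAcrossEq S e) {X : Finset V} (hX : IsMaximalInducedForest L X)
    {Y : Finset (S : Set V)} (hY : Y.map (Function.Embedding.subtype _) = X ∩ S) :
    IsMaximalInducedForest (L.induce S) Y := by
  refine ⟨(isInducedForest_induce_iff _ _).2 (hY ▸ hX.1.mono inter_subset_left),
    fun Z hYZ hZ => ?_⟩
  set Z' := Z.map (Function.Embedding.subtype _)
  have hZ' : IsInducedForest L (Z' ∪ X \ S) :=
    ((isInducedForest_induce_iff _ _).1 hZ).union hS (hX.1.mono sdiff_subset)
      (fun x hx => by obtain ⟨z, -, rfl⟩ := mem_map.1 hx; exact z.2)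
      fun y hy => (mem_sdiff.1 hy).2
  refine hX.2 _ ((ssubset_iff_of_subset ?_).2 ?_) hZ'
  · intro x hx
    by_cases hxS : x ∈ S
    · exact mem_union_left _ (map_subset_map.2 hYZ.subset (hY ▸ mem_inter.2 ⟨hx, hxS⟩))
    · exact mem_union_right _ (mem_sdiff.2 ⟨hx, hxS⟩)
  · obtain ⟨z, hzZ, hzY⟩ := exists_of_ssubset hYZ
    refine ⟨z, mem_union_left _ (mem_map_of_mem _ hzZ), fun hzX => hzY ?_⟩
    have : (z : V) ∈ Y.map (Function.Embedding.subtype _) := hY ▸ mem_inter.2 ⟨hzX, z.2⟩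
    simpa using this

end InducedForest

section ForestNumber

variable {V : Type*} [Fintype V] {G : SimpleGraph V}

lemma bddAbove_card_isInducedForest (G : SimpleGraph V) :
    BddAbove {n | ∃ X : Finset V, IsInducedForest G X ∧ X.card = n} :=
  ⟨Fintype.card V, by rintro n ⟨X, -, rfl⟩; exact card_le_univ X⟩

lemma exists_isInducedForest_card_eq_forestNum (G : SimpleGraph V) :
    ∃ X, IsInducedForest G X ∧ X.card = forestNum G :=
  Nat.sSup_mem (s := {n | ∃ X : Finset V, IsInducedForest G X ∧ X.card = n})
    ⟨0, ∅, isInducedForest_empty, card_empty⟩ (bddAbove_card_isInducedForest G)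

lemma IsInducedForest.card_le_forestNum {X : Finset V} (hX : IsInducedForest G X) :
    X.card ≤ forestNum G :=
  le_csSup (bddAbove_card_isInducedForest G) ⟨X, hX, rfl⟩

lemma IsInducedForest.isMaximalInducedForest_of_card_eq {X : Finset V}
    (hX : IsInducedForest G X) (hXc : X.card = forestNum G) : IsMaximalInducedForest G X :=
  ⟨hX, fun _Y hXY hY => (card_lt_card hXY).not_ge (hXc ▸ hY.card_le_forestNum)⟩

lemma WellFCovered.card_eq_forestNum (h : WellFCovered G) {X : Finset V}
    (hX : IsMaximalInducedForest G X) : X.card = forestNum G := by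
  obtain ⟨F, hF, hFc⟩ := exists_isInducedForest_card_eq_forestNum G
  exact (h X F hX (hF.isMaximalInducedForest_of_card_eq hFc)).trans hFc

end ForestNumber

lemma IsMaximalInducedForest.card_inter_eq_forestNum {V : Type*} [DecidableEq V]
    {L : SimpleGraph V} {S : Finset V} {e : Sym2 V} (hS : L.EdgesAcrossEq S e)
    (hwS : WellFCovered (L.induce (S : Set V))) {X : Finset V}
    (hX : IsMaximalInducedForest L X) : (X ∩ S).card = forestNum (L.induce (S : Set V)) := by
  have hY : (X.subtype (· ∈ (S : Set V))).map (Function.Embedding.subtype _) = X ∩ S := by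
    simp [filter_mem_eq_inter]
  rw [← hY, card_map]
  exact hwS.card_eq_forestNum (hX.induce hS hY)

theorem stmt6_general {V : Type*} [Fintype V] [DecidableEq V] (L : SimpleGraph V)
    (A B : Finset V) (hdisj : Disjoint A B)
    (hcover : A ∪ B = Finset.univ)
    (hbridge : ∃! p : V × V, p.1 ∈ A ∧ p.2 ∈ B ∧ L.Adj p.1 p.2)
    (hwA : WellFCovered (L.induce (A : Set V)))
    (hwB : WellFCovered (L.induce (B : Set V))) :
    WellFCovered L ∧
      forestNum L = forestNum (L.induce (A : Set V)) + forestNum (L.induce (B : Set V)) := by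
  obtain ⟨⟨a, b⟩, -, hab⟩ := hbridge
  obtain rfl : B = Aᶜ := (isCompl_iff.2 ⟨hdisj, codisjoint_iff.2 hcover⟩).compl_eq.symm
  have hcut : L.EdgesAcrossEq A s(a, b) := fun x y hx hy hxy => by
    obtain ⟨⟩ := hab (x, y) ⟨hx, by simpa using hy, hxy⟩
    rfl
  have hcut' : L.EdgesAcrossEq (Aᶜ : Finset V) s(a, b) := by
    rw [coe_compl]
    exact hcut.compl
  have hcard {X : Finset V} (hX : IsMaximalInducedForest L X) :
      X.card = forestNum (L.induce (A : Set V)) + forestNum (L.induce (Aᶜ : Finset V)) := by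
    rw [← hX.card_inter_eq_forestNum hcut hwA, ← hX.card_inter_eq_forestNum hcut' hwB,
      ← sdiff_eq_inter_compl, card_inter_add_card_sdiff]
  obtain ⟨X, hX, hXc⟩ := exists_isInducedForest_card_eq_forestNum L
  exact ⟨fun Y Z hY hZ => (hcard hY).trans (hcard hZ).symm,
    hXc.symm.trans (hcard (hX.isMaximalInducedForest_of_card_eq hXc))⟩

/-- If the vertex set of `L` is the disjoint union of nonempty sets `A`
and `B` with exactly one edge of `L` joining `A` to `B` (a bridge), and the induced
subgraphs `L[A]` and `L[B]` are well-f-covered, then `L` is well-f-covered and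
`f(L) = f(L[A]) + f(L[B])`. -/
theorem stmt6 {V : Type*} [Fintype V] [DecidableEq V] (L : SimpleGraph V)
    (A B : Finset V) (hA : A.Nonempty) (hB : B.Nonempty) (hdisj : Disjoint A B)
    (hcover : A ∪ B = Finset.univ)
    (hbridge : ∃! p : V × V, p.1 ∈ A ∧ p.2 ∈ B ∧ L.Adj p.1 p.2)
    (hwA : WellFCovered (L.induce (A : Set V)))
    (hwB : WellFCovered (L.induce (B : Set V))) :
    WellFCovered L ∧
      forestNum L = forestNum (L.induce (A : Set V)) + forestNum (L.induce (B : Set V)) :=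
  stmt6_general L A B hdisj hcover hbridge hwA hwB
end

section
/- Let n ≥ 1 and s ≥ 1, and let G be a finite simple graph whose vertex set is partitioned into s sets A_1, ..., A_s, each of cardinality n, such that each induced subgraph G[A_i] is a complete graph, every edge of G joining vertices of different parts lies in a fixed matching M (i.e., each vertex of G is incident with at most one edge whose endpoints lie in different parts, and all such cross edges are pairwise non-adjacent). Then G is well-f-covered, and if n ≥ 3 then f(G) = 2s. -/
/-!
Every part is a clique, so an induced forest meets each part in at most two vertices, and each
of its vertices has at most two neighbours in it: at most one in its own part and at most one
across the matching.

If `n ≤ 2` the whole graph has maximum degree two, so it is a disjoint union of paths and cycles,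
and a maximal induced forest omits exactly one vertex of each cycle component.

If `n ≥ 3`, a maximal induced forest `X` meets every part `Aᵢ` in exactly two vertices. A part
missed by `X` could receive any of its vertices, which has at most one neighbour in `X`. If
`X ∩ Aᵢ = {u}`, pick `w₁ ≠ w₂` in `Aᵢ \ X`: adding `wⱼ` is blocked by a path in `X` from `u` to the
matching partner `pⱼ` of `wⱼ`. Then `u`, `p₁`, `p₂` are three vertices with at most one neighbour
in `X`, all on one component of `X`, which is a path — impossible.
-/

section

open SimpleGraph Finset

variable {V : Type*} {G : SimpleGraph V}

theorem isInducedForest_iff {X : Finset V} :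
    IsInducedForest G X ↔
      ∀ u (c : G.Walk u u), c.IsCycle → ¬ ∀ x ∈ c.support, x ∈ X := by
  have hinj : Function.Injective (Embedding.induce (G := G) (X : Set V)).toHom :=
    Subtype.val_injective
  refine ⟨fun hX u c hc hcX => hX (c.induce X hcX) ?_, fun h u c hc => ?_⟩
  · rwa [← Walk.isCycle_map_iff_of_injective hinj, Walk.map_induce]
  · refine h _ _ (hc.map hinj) fun x hx => ?_
    obtain ⟨y, -, rfl⟩ := List.mem_map.mp ((Walk.support_map _ _).symm ▸ hx)
    exact y.2

theorem IsInducedForest.anti {X Y : Finset V} (hY : IsInducedForest G Y) (h : X ⊆ Y) :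
    IsInducedForest G X :=
  IsAcyclic.embedding (G.induceHomOfLE (coe_subset.mpr h)) hY

theorem isInducedForest_empty_s12 : IsInducedForest G ∅ :=
  isInducedForest_iff.mpr fun u _ _ h => by simpa using h u (Walk.start_mem_support _)

theorem not_isInducedForest_of_adj {X : Finset V} {a b c : V} (hab : G.Adj a b)
    (hac : G.Adj a c) (hbc : G.Adj b c) (ha : a ∈ X) (hb : b ∈ X) (hc : c ∈ X) :
    ¬ IsInducedForest G X := by
  classical
  intro hX
  exact IsAcyclic.cliqueFree hX le_rfl {⟨a, ha⟩, ⟨b, hb⟩, ⟨c, hc⟩}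
    (is3Clique_triple_iff.mpr ⟨induce_adj.2 hab, induce_adj.2 hac, induce_adj.2 hbc⟩)

theorem isMaximalInducedForest_iff [DecidableEq V] {X : Finset V} :
    IsMaximalInducedForest G X ↔
      IsInducedForest G X ∧ ∀ v ∉ X, ¬ IsInducedForest G (insert v X) := by
  refine and_congr_right fun _ => ⟨fun h v hv => h _ (ssubset_insert hv), fun h Y hXY hY => ?_⟩
  obtain ⟨v, hvY, hvX⟩ := exists_of_ssubset hXY
  exact h v hvX (hY.anti (insert_subset hvY hXY.subset))

theorem exists_isMaximalInducedForest [Finite V] : ∃ X, IsMaximalInducedForest G X := by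
  obtain ⟨X, -, hX⟩ := Finite.exists_le_maximal (isInducedForest_empty_s12 (G := G))
  exact ⟨X, hX.1, fun Y hXY hY => not_le_of_gt hXY (hX.2 hY hXY.le)⟩

theorem forestNum_eq {m : ℕ} (hm : ∃ X, IsInducedForest G X ∧ #X = m)
    (hle : ∀ X, IsInducedForest G X → #X ≤ m) : forestNum G = m :=
  IsGreatest.csSup_eq ⟨hm, by rintro _ ⟨X, hX, rfl⟩; exact hle X hX⟩

namespace SimpleGraph.Walk

theorem IsCycle.exists_adj_adj_isPath {v : V} {c : G.Walk v v} (hc : c.IsCycle) :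
    ∃ a b, a ≠ b ∧ G.Adj v a ∧ G.Adj v b ∧
      ∃ p : G.Walk a b, p.IsPath ∧ ∀ x ∈ p.support, x ∈ c.support ∧ x ≠ v := by
  have hlen := hc.three_le_length
  have htail : ¬ c.tail.Nil := by rw [← length_eq_zero_iff]; simp; omega
  have hpen : c.tail.penultimate = c.penultimate := by
    simp only [penultimate, getVert_tail, length_tail]
    congr 1; omega
  refine ⟨c.snd, c.tail.penultimate, hpen ▸ hc.snd_ne_penultimate, c.adj_snd hc.not_nil,
    (c.tail.adj_penultimate htail).symm, c.tail.dropLast, hc.isPath_tail.dropLast, fun x hx => ?_⟩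
  rw [support_dropLast htail] at hx
  have hnd := hc.isPath_tail.support_nodup
  rw [← dropLast_support_concat c.tail] at hnd
  refine ⟨?_, ?_⟩
  · rw [← cons_support_tail hc.not_nil]
    exact List.mem_cons_of_mem _ (List.mem_of_mem_dropLast hx)
  · rintro rfl
    exact (List.nodup_append.mp hnd).2.2 _ hx _ (List.mem_singleton_self _) rfl

theorem IsPath.exists_adj_adj_of_mem_support {u v x : V} {p : G.Walk u v} (hp : p.IsPath)
    (hx : x ∈ p.support) (hxu : x ≠ u) (hxv : x ≠ v) :
    ∃ y ∈ p.support, ∃ z ∈ p.support, y ≠ z ∧ G.Adj x y ∧ G.Adj x z := by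
  induction p with
  | nil => exact absurd (mem_support_nil_iff.mp hx) hxu
  | @cons u c v huc q ih =>
    rw [cons_isPath_iff] at hp
    rw [support_cons, List.mem_cons] at hx
    rcases hx with rfl | hx
    · exact absurd rfl hxu
    by_cases hxc : x = c
    · subst hxc
      cases q with
      | nil => exact absurd rfl hxv
      | cons hcd r =>
        refine ⟨u, by simp, _, by simp, ?_, huc.symm, hcd⟩
        rintro rfl
        exact hp.2 (by simp)
    · obtain ⟨y, hy, z, hz, hyz, hxy, hxz⟩ := ih hp.1 hx hxc hxv
      exact ⟨y, by simp [hy], z, by simp [hz], hyz, hxy, hxz⟩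

end SimpleGraph.Walk

section Insert

variable [DecidableEq V] {X : Finset V} {v : V}

theorem exists_isCycle_of_not_isInducedForest_insert (hX : IsInducedForest G X)
    (h : ¬ IsInducedForest G (insert v X)) :
    ∃ c : G.Walk v v, c.IsCycle ∧ ∀ x ∈ c.support, x ∈ insert v X := by
  rw [isInducedForest_iff] at h
  push Not at h
  obtain ⟨u, c, hc, hcX⟩ := h
  have hv : v ∈ c.support := by
    by_contra hv
    refine isInducedForest_iff.mp hX u c hc fun x hx => ?_
    exact (mem_insert.mp (hcX x hx)).resolve_left (ne_of_mem_of_not_mem hx hv)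
  exact ⟨c.rotate v hv, hc.rotate hv, fun x hx => hcX x ((c.mem_support_rotate_iff v hv).mp hx)⟩

theorem exists_isPath_of_not_isInducedForest_insert (hX : IsInducedForest G X)
    (h : ¬ IsInducedForest G (insert v X)) :
    ∃ a ∈ X, ∃ b ∈ X, a ≠ b ∧ G.Adj v a ∧ G.Adj v b ∧
      ∃ p : G.Walk a b, p.IsPath ∧ ∀ x ∈ p.support, x ∈ X := by
  obtain ⟨c, hc, hcX⟩ := exists_isCycle_of_not_isInducedForest_insert hX h
  obtain ⟨a, b, hab, hva, hvb, p, hp, hpc⟩ := hc.exists_adj_adj_isPath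
  have hpX : ∀ x ∈ p.support, x ∈ X := fun x hx =>
    (mem_insert.mp (hcX x (hpc x hx).1)).resolve_left (hpc x hx).2
  exact ⟨a, hpX a p.start_mem_support, b, hpX b p.end_mem_support, hab, hva, hvb, p, hp, hpX⟩

end Insert

def DegreeLeTwoOn (G : SimpleGraph V) (S : Set V) : Prop :=
  ∀ x ∈ S, ∀ y ∈ S, ∀ z ∈ S, ∀ w ∈ S, G.Adj x y → G.Adj x z → G.Adj x w →
    y = z ∨ y = w ∨ z = w

namespace DegreeLeTwoOn

theorem mono {S T : Set V} (hS : DegreeLeTwoOn G S) (hT : T ⊆ S) : DegreeLeTwoOn G T :=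
  fun x hx y hy z hz w hw => hS x (hT hx) y (hT hy) z (hT hz) w (hT hw)

-- Both paths leave `u` through its only neighbour in `S`; then induct, deleting `u` from `S`.
theorem mem_support_or_mem_support {S : Set V} (hS : DegreeLeTwoOn G S)
    {u a b : V} {p : G.Walk u a} {q : G.Walk u b} (hp : p.IsPath) (hq : q.IsPath)
    (hpS : ∀ x ∈ p.support, x ∈ S) (hqS : ∀ x ∈ q.support, x ∈ S)
    (hu : (G.neighborSet u ∩ S).Subsingleton) : a ∈ q.support ∨ b ∈ p.support := by
  induction p generalizing S with
  | nil => exact .inl q.start_mem_support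
  | @cons u c a huc p ih =>
    cases q with
    | nil => exact .inr (Walk.start_mem_support _)
    | @cons _ d b hud q =>
      have hc : c ∈ S := hpS c (by simp)
      obtain rfl : c = d := hu ⟨huc, hc⟩ ⟨hud, hqS d (by simp)⟩
      rw [Walk.cons_isPath_iff] at hp hq
      have hu' : ∀ x ∈ S, x ≠ u → x ∈ S \ {u} := fun x hx hxu => ⟨hx, hxu⟩
      have hc' : (G.neighborSet c ∩ (S \ {u})).Subsingleton := by
        rintro y ⟨hcy, hyS, hyu⟩ z ⟨hcz, hzS, hzu⟩
        rcases hS c hc y hyS z hzS u (hpS u (by simp)) hcy hcz huc.symm with h | h | h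
        exacts [h, absurd h hyu, absurd h hzu]
      exact (ih (hS.mono Set.sdiff_subset) hp.1 hq.1
        (fun x hx => hu' x (hpS x (by simp [hx])) (ne_of_mem_of_not_mem hx hp.2))
        (fun x hx => hu' x (hqS x (by simp [hx])) (ne_of_mem_of_not_mem hx hq.2)) hc').imp
        (fun h => by simp [h]) (fun h => by simp [h])

theorem eq_of_isPath {S : Set V} (hS : DegreeLeTwoOn G S) {u a b : V}
    {p : G.Walk u a} {q : G.Walk u b} (hp : p.IsPath) (hq : q.IsPath)
    (hpS : ∀ x ∈ p.support, x ∈ S) (hqS : ∀ x ∈ q.support, x ∈ S)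
    (hu : (G.neighborSet u ∩ S).Subsingleton) (ha : (G.neighborSet a ∩ S).Subsingleton)
    (hb : (G.neighborSet b ∩ S).Subsingleton) (hau : a ≠ u) (hbu : b ≠ u) : a = b := by
  by_contra hab
  rcases hS.mem_support_or_mem_support hp hq hpS hqS hu with h | h
  · obtain ⟨y, hy, z, hz, hyz, hay, haz⟩ := hq.exists_adj_adj_of_mem_support h hau hab
    exact hyz (ha ⟨hay, hqS y hy⟩ ⟨haz, hqS z hz⟩)
  · obtain ⟨y, hy, z, hz, hyz, hby, hbz⟩ :=
      hp.exists_adj_adj_of_mem_support h hbu (Ne.symm hab)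
    exact hyz (hb ⟨hby, hpS y hy⟩ ⟨hbz, hpS z hz⟩)

theorem mem_support_of_adj (hG : DegreeLeTwoOn G Set.univ) {u x y : V} {c : G.Walk u u}
    (hc : c.IsCycle) (hx : x ∈ c.support) (hxy : G.Adj x y) : y ∈ c.support := by
  classical
  set c' := c.rotate x hx
  have hc' : c'.IsCycle := hc.rotate hx
  rw [← c.mem_support_rotate_iff x hx]
  rcases hG x trivial y trivial _ trivial _ trivial hxy (c'.adj_snd hc'.not_nil)
      (c'.adj_penultimate hc'.not_nil).symm with h | h | h
  · exact h ▸ c'.getVert_mem_support 1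
  · exact h ▸ c'.getVert_mem_support _
  · exact absurd h hc'.snd_ne_penultimate

theorem mem_support_of_reachable (hG : DegreeLeTwoOn G Set.univ) {u x y : V} {c : G.Walk u u}
    (hc : c.IsCycle) (hx : x ∈ c.support) (hxy : G.Reachable x y) : y ∈ c.support := by
  obtain ⟨p⟩ := hxy
  induction p with
  | nil => exact hx
  | cons h p ih => exact ih (hG.mem_support_of_adj hc hx h)

-- Sends each vertex missed by `X` to a vertex missed by `Y` on the cycle it closes; these
-- cycles are whole components, each containing only one vertex missed by `X`.
theorem card_compl_le [Fintype V] [DecidableEq V] (hG : DegreeLeTwoOn G Set.univ) {X Y : Finset V}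
    (hX : IsMaximalInducedForest G X) (hY : IsInducedForest G Y) : #Xᶜ ≤ #Yᶜ := by
  obtain ⟨hXf, hXmax⟩ := isMaximalInducedForest_iff.mp hX
  have hcomp : ∀ v ∉ X,
      (∀ w, G.Reachable v w → w ∈ insert v X) ∧ ∃ z ∉ Y, G.Reachable v z := by
    intro v hv
    obtain ⟨c, hc, hcX⟩ := exists_isCycle_of_not_isInducedForest_insert hXf (hXmax v hv)
    refine ⟨fun w hw => hcX w (hG.mem_support_of_reachable hc c.start_mem_support hw), ?_⟩
    by_contra! h
    exact isInducedForest_iff.mp hY v c hc fun z hz =>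
      by_contra fun hzY => h z hzY ⟨c.takeUntil z hz⟩
  choose! f hfY hf using fun v hv => (hcomp v hv).2
  refine card_le_card_of_injOn f (fun v hv => ?_) (fun v₁ hv₁ v₂ hv₂ heq => ?_)
  · simpa using hfY v (by simpa using hv)
  · simp only [coe_compl, Set.mem_compl_iff, mem_coe] at hv₁ hv₂
    have hreach : G.Reachable v₁ v₂ := (hf v₁ hv₁).trans (heq ▸ (hf v₂ hv₂).symm)
    exact ((mem_insert.mp ((hcomp v₁ hv₁).1 v₂ hreach)).resolve_right hv₂).symm

theorem wellFCovered [Fintype V] (hG : DegreeLeTwoOn G Set.univ) : WellFCovered G := by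
  classical
  intro X Y hX hY
  have h₁ := hG.card_compl_le hX hY.1
  have h₂ := hG.card_compl_le hY hX.1
  rw [card_compl, card_compl] at h₁ h₂
  have := card_le_univ X
  have := card_le_univ Y
  omega

end DegreeLeTwoOn

structure IsCliquePartitionWithMatching {ι : Type*} (G : SimpleGraph V) (part : V → ι) :
    Prop where
  adj_of_part_eq : ∀ u v, u ≠ v → part u = part v → G.Adj u v
  eq_of_adj_of_part_ne :
    ∀ v a b, G.Adj v a → G.Adj v b → part v ≠ part a → part v ≠ part b → a = b

namespace IsCliquePartitionWithMatching

variable {ι : Type*} {part : V → ι} {X : Finset V}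

theorem degreeLeTwoOn (hP : IsCliquePartitionWithMatching G part) {S : Set V}
    (hsame : ∀ x ∈ S, ∀ y ∈ S, ∀ z ∈ S, G.Adj x y → G.Adj x z →
      part y = part x → part z = part x → y = z) :
    DegreeLeTwoOn G S := by
  intro x hx y hy z hz w hw hxy hxz hxw
  have key : ∀ a ∈ S, ∀ b ∈ S, G.Adj x a → G.Adj x b →
      (part a = part x ↔ part b = part x) → a = b := by
    intro a ha b hb hxa hxb hab
    by_cases h : part a = part x
    · exact hsame x hx a ha b hb hxa hxb h (hab.mp h)
    · exact hP.eq_of_adj_of_part_ne x a b hxa hxb (Ne.symm h) fun e => h (hab.mpr e.symm)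
  have : (part y = part x ↔ part z = part x) ∨ (part y = part x ↔ part w = part x) ∨
      (part z = part x ↔ part w = part x) := by tauto
  rcases this with h | h | h
  · exact .inl (key y hy z hz hxy hxz h)
  · exact .inr (.inl (key y hy w hw hxy hxw h))
  · exact .inr (.inr (key z hz w hw hxz hxw h))

theorem eq_of_adj_of_part_eq (hP : IsCliquePartitionWithMatching G part)
    (hX : IsInducedForest G X) {x y z : V} (hx : x ∈ X) (hy : y ∈ X) (hz : z ∈ X)
    (hxy : G.Adj x y) (hxz : G.Adj x z) (hyx : part y = part x) (hzx : part z = part x) :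
    y = z :=
  by_contra fun hyz => not_isInducedForest_of_adj hxy hxz
    (hP.adj_of_part_eq y z hyz (hyx.trans hzx.symm)) hx hy hz hX

theorem degreeLeTwoOn_of_isInducedForest (hP : IsCliquePartitionWithMatching G part)
    (hX : IsInducedForest G X) : DegreeLeTwoOn G X :=
  hP.degreeLeTwoOn fun _ hx _ hy _ hz => hP.eq_of_adj_of_part_eq hX hx hy hz

theorem degreeLeTwoOn_univ [Fintype V] [DecidableEq ι] (hP : IsCliquePartitionWithMatching G part)
    (hsize : ∀ i, #{v | part v = i} ≤ 2) : DegreeLeTwoOn G Set.univ := by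
  refine hP.degreeLeTwoOn fun x _ y _ z _ hxy hxz hyx hzx => by_contra fun hyz => ?_
  have : 2 < #{v | part v = part x} :=
    two_lt_card_iff.mpr ⟨x, y, z, by simp, by simp [hyx], by simp [hzx], hxy.ne, hxz.ne, hyz⟩
  exact absurd (hsize (part x)) (by omega)

theorem card_filter_le_two [DecidableEq ι] (hP : IsCliquePartitionWithMatching G part)
    (hX : IsInducedForest G X) (i : ι) : #{v ∈ X | part v = i} ≤ 2 := by
  by_contra! h
  obtain ⟨a, ha, b, hb, c, hc, hab, hac, hbc⟩ := two_lt_card.mp h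
  simp only [mem_filter] at ha hb hc
  exact not_isInducedForest_of_adj (hP.adj_of_part_eq a b hab (ha.2.trans hb.2.symm))
    (hP.adj_of_part_eq a c hac (ha.2.trans hc.2.symm))
    (hP.adj_of_part_eq b c hbc (hb.2.trans hc.2.symm)) ha.1 hb.1 hc.1 hX

theorem card_le_two_mul [Fintype ι] [DecidableEq ι] (hP : IsCliquePartitionWithMatching G part)
    (hX : IsInducedForest G X) : #X ≤ 2 * Fintype.card ι := by
  rw [card_eq_sum_card_fiberwise fun x _ => mem_univ (part x)]
  calc ∑ i, #{v ∈ X | part v = i} ≤ ∑ _i : ι, 2 :=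
        sum_le_sum fun i _ => hP.card_filter_le_two hX i
    _ = 2 * Fintype.card ι := by simp [mul_comm]

theorem exists_mem_part_eq (hP : IsCliquePartitionWithMatching G part)
    (hX : IsMaximalInducedForest G X) (w : V) : ∃ x ∈ X, part x = part w := by
  classical
  obtain ⟨hXf, hXmax⟩ := isMaximalInducedForest_iff.mp hX
  by_cases hw : w ∈ X
  · exact ⟨w, hw, rfl⟩
  obtain ⟨a, ha, b, hb, hab, hwa, hwb, -⟩ :=
    exists_isPath_of_not_isInducedForest_insert hXf (hXmax w hw)
  by_contra! h
  exact hab (hP.eq_of_adj_of_part_ne w a b hwa hwb (h a ha).symm (h b hb).symm)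

theorem exists_adj_isPath_of_part_eq (hP : IsCliquePartitionWithMatching G part)
    (hX : IsMaximalInducedForest G X) {u w : V} (huniq : ∀ x ∈ X, part x = part u → x = u)
    (hwu : part w = part u) (hw : w ≠ u) :
    ∃ p ∈ X, G.Adj w p ∧ part p ≠ part u ∧
      ∃ P : G.Walk u p, P.IsPath ∧ ∀ x ∈ P.support, x ∈ X := by
  classical
  obtain ⟨hXf, hXmax⟩ := isMaximalInducedForest_iff.mp hX
  have hwX : w ∉ X := fun h => hw (huniq w h hwu)
  obtain ⟨a, ha, b, hb, hab, hwa, hwb, P, hP', hPX⟩ :=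
    exists_isPath_of_not_isInducedForest_insert hXf (hXmax w hwX)
  have hpart : part a = part u ∨ part b = part u := by
    by_contra! h
    exact hab (hP.eq_of_adj_of_part_ne w a b hwa hwb (hwu ▸ h.1.symm) (hwu ▸ h.2.symm))
  rcases hpart with h | h
  · obtain rfl := huniq a ha h
    exact ⟨b, hb, hwb, fun h' => hab (huniq b hb h').symm, P, hP', hPX⟩
  · obtain rfl := huniq b hb h
    refine ⟨a, ha, hwa, fun h' => hab (huniq a ha h'), P.reverse, hP'.reverse, fun x hx => ?_⟩
    exact hPX x (by simpa using hx)

theorem eq_of_part_eq_of_unique (hP : IsCliquePartitionWithMatching G part)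
    (hX : IsMaximalInducedForest G X) {u w₁ w₂ : V}
    (huniq : ∀ x ∈ X, part x = part u → x = u) (hw₁u : part w₁ = part u)
    (hw₂u : part w₂ = part u) (hw₁ : w₁ ≠ u) (hw₂ : w₂ ≠ u) : w₁ = w₂ := by
  by_contra hw₁₂
  obtain ⟨p₁, hp₁, hwp₁, hp₁u, P₁, hP₁, hP₁X⟩ :=
    hP.exists_adj_isPath_of_part_eq hX huniq hw₁u hw₁
  obtain ⟨p₂, hp₂, hwp₂, hp₂u, P₂, hP₂, hP₂X⟩ :=
    hP.exists_adj_isPath_of_part_eq hX huniq hw₂u hw₂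
  have hu_nbr : (G.neighborSet u ∩ X).Subsingleton := by
    rintro y ⟨huy, hy⟩ z ⟨huz, hz⟩
    refine hP.eq_of_adj_of_part_ne u y z huy huz ?_ ?_
    · exact fun h => huy.ne (huniq y hy h.symm).symm
    · exact fun h => huz.ne (huniq z hz h.symm).symm
  -- The matching partner `w ∉ X` of `p` accounts for the only edge of `p` leaving its part.
  have hp_nbr : ∀ p w, p ∈ X → w ∉ X → G.Adj w p → part p ≠ part w →
      (G.neighborSet p ∩ X).Subsingleton := by
    rintro p w hp hwX hwp hpw y ⟨hpy, hy⟩ z ⟨hpz, hz⟩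
    have hsame : ∀ x ∈ X, G.Adj p x → part x = part p := fun x hx hpx => by_contra fun h =>
      hwX (hP.eq_of_adj_of_part_ne p x w hpx hwp.symm (Ne.symm h) hpw ▸ hx)
    exact hP.eq_of_adj_of_part_eq hX.1 hp hy hz hpy hpz (hsame y hy hpy) (hsame z hz hpz)
  have hwX : ∀ w, part w = part u → w ≠ u → w ∉ X := fun w hwu hw h => hw (huniq w h hwu)
  have hp₁₂ : p₁ ≠ p₂ := by
    rintro rfl
    exact hw₁₂ (hP.eq_of_adj_of_part_ne p₁ w₁ w₂ hwp₁.symm hwp₂.symm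
      (hw₁u ▸ hp₁u) (hw₂u ▸ hp₁u))
  exact hp₁₂ ((hP.degreeLeTwoOn_of_isInducedForest hX.1).eq_of_isPath hP₁ hP₂ hP₁X hP₂X hu_nbr
    (hp_nbr p₁ w₁ hp₁ (hwX w₁ hw₁u hw₁) hwp₁ (hw₁u ▸ hp₁u))
    (hp_nbr p₂ w₂ hp₂ (hwX w₂ hw₂u hw₂) hwp₂ (hw₂u ▸ hp₂u))
    (fun h => hp₁u (congrArg part h)) (fun h => hp₂u (congrArg part h)))

theorem card_filter_eq_two [Fintype V] [DecidableEq ι] (hP : IsCliquePartitionWithMatching G part)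
    (hX : IsMaximalInducedForest G X) {i : ι} (hi : 3 ≤ #{v | part v = i}) :
    #{v ∈ X | part v = i} = 2 := by
  classical
  have hle := hP.card_filter_le_two hX.1 i
  obtain ⟨w, hw⟩ : ∃ w, part w = i := by
    obtain ⟨w, hw⟩ := card_pos.mp (by omega : 0 < #{v | part v = i})
    exact ⟨w, (mem_filter.mp hw).2⟩
  have hpos : 0 < #{v ∈ X | part v = i} := by
    obtain ⟨x, hx, hxw⟩ := hP.exists_mem_part_eq hX w
    exact card_pos.mpr ⟨x, mem_filter.mpr ⟨hx, hxw.trans hw⟩⟩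
  have hne : #{v ∈ X | part v = i} ≠ 1 := by
    intro h
    obtain ⟨u, hu⟩ := card_eq_one.mp h
    have hu' : u ∈ X ∧ part u = i := mem_filter.mp (hu ▸ mem_singleton_self u)
    have huniq : ∀ x ∈ X, part x = part u → x = u := fun x hx hxu =>
      mem_singleton.mp (hu ▸ mem_filter.mpr ⟨hx, hxu.trans hu'.2⟩)
    have h2 : 1 < #(({v | part v = i} : Finset V).erase u) := by
      rw [card_erase_of_mem (by simpa using hu'.2)]
      omega
    obtain ⟨w₁, hw₁, w₂, hw₂, hw₁₂⟩ := one_lt_card.mp h2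
    simp only [mem_erase, mem_filter, mem_univ, true_and] at hw₁ hw₂
    exact hw₁₂ (hP.eq_of_part_eq_of_unique hX huniq (hw₁.2.trans hu'.2.symm)
      (hw₂.2.trans hu'.2.symm) hw₁.1 hw₂.1)
  omega

theorem card_eq_two_mul [Fintype V] [Fintype ι] [DecidableEq ι]
    (hP : IsCliquePartitionWithMatching G part) (hsize : ∀ i, 3 ≤ #{v | part v = i})
    (hX : IsMaximalInducedForest G X) : #X = 2 * Fintype.card ι := by
  rw [card_eq_sum_card_fiberwise fun x _ => mem_univ (part x),
    sum_congr rfl fun i _ => hP.card_filter_eq_two hX (hsize i)]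
  simp [mul_comm]

end IsCliquePartitionWithMatching

end

theorem stmt12_general {V : Type*} [Fintype V] (G : SimpleGraph V)
    (n s : ℕ) (part : V → Fin s)
    (hsize : ∀ i : Fin s, (Finset.univ.filter fun v => part v = i).card = n)
    (hcomplete : ∀ u v : V, u ≠ v → part u = part v → G.Adj u v)
    (hmatching : ∀ v a b : V, G.Adj v a → G.Adj v b →
      part v ≠ part a → part v ≠ part b → a = b) :
    WellFCovered G ∧ (3 ≤ n → forestNum G = 2 * s) := by
  have hP : IsCliquePartitionWithMatching G part := ⟨hcomplete, hmatching⟩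
  have hcard : ∀ {X}, IsMaximalInducedForest G X → 3 ≤ n → X.card = 2 * s := fun hX hn =>
    (hP.card_eq_two_mul (fun i => hsize i ▸ hn) hX).trans (by simp)
  refine ⟨?_, fun hn => ?_⟩
  · by_cases hn : 3 ≤ n
    · exact fun X Y hX hY => (hcard hX hn).trans (hcard hY hn).symm
    · exact (hP.degreeLeTwoOn_univ fun i => (hsize i).trans_le (by omega)).wellFCovered
  · obtain ⟨X, hX⟩ := exists_isMaximalInducedForest (G := G)
    exact forestNum_eq ⟨X, hX.1, hcard hX hn⟩ fun Y hY =>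
      (hP.card_le_two_mul hY).trans (by simp)

/-- Let the vertex set of `G` be partitioned into `s` parts, each of
cardinality `n`, each inducing a complete graph, and suppose every edge joining
vertices of different parts lies in a fixed matching (each vertex is incident with at
most one such cross edge). Then `G` is well-f-covered, and if `n ≥ 3` then
`f(G) = 2s`. -/
theorem stmt12 {V : Type*} [Fintype V] [DecidableEq V] (G : SimpleGraph V)
    (n s : ℕ) (hn : 1 ≤ n) (hs : 1 ≤ s) (part : V → Fin s)
    (hsize : ∀ i : Fin s, (Finset.univ.filter fun v => part v = i).card = n)
    (hcomplete : ∀ u v : V, u ≠ v → part u = part v → G.Adj u v)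
    (hmatching : ∀ v a b : V, G.Adj v a → G.Adj v b →
      part v ≠ part a → part v ≠ part b → a = b) :
    WellFCovered G ∧ (3 ≤ n → forestNum G = 2 * s) :=
  stmt12_general G n s part hsize hcomplete hmatching
end
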